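/- Let q ≥ 3 and n ≥ 3. If n is odd then |A_q(n)| = Σ_{i=0}^{⌊n/2⌋} M_{q−2}(i)·M_{q−2}(n−i−2), and if n is even then |A_q(n)| = Σ_{i=0}^{n/2} M_{q−2}(i)·M_{q−2}(n−i−2) − (M_{q−2}(n/2 − 2))². -/

import Mathlib

/-- Value of a letter: 1 ↦ +1, 0 ↦ -1, other letters ↦ 0. -/
def mval (a : ℕ) : ℤ := if a = 1 then 1 else if a = 0 then -1 else 0

/-- Value-sum of a word. -/
def vsum (w : List ℕ) : ℤ := (w.map mval).sum

/-- A (q-2)-colored Motzkin word over the alphabet Z_q = {0,...,q-1}: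
all letters < q, every prefix has nonnegative value-sum, total value-sum 0. -/
def IsMotzkinWord (q : ℕ) (w : List ℕ) : Prop :=
  (∀ a ∈ w, a < q) ∧ (∀ u, u <+: w → 0 ≤ vsum u) ∧ vsum w = 0

/-- The set 𝓜_{q-2}(n) of (q-2)-colored Motzkin words of length n. -/
def MotzkinSet (q n : ℕ) : Set (List ℕ) := {w | w.length = n ∧ IsMotzkinWord q w}

/-- M_{q-2}(n), the number of (q-2)-colored Motzkin words of length n. -/
noncomputable def Mnum (q n : ℕ) : ℕ := (MotzkinSet q n).ncard

/-- The set Ê_{q-2}(n) of elevated (q-2)-colored Motzkin words of length n: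
words 1α0 with α ∈ 𝓜_{q-2}(n-2). -/
def ElevatedSet (q n : ℕ) : Set (List ℕ) :=
  {w | w.length = n ∧ ∃ α ∈ MotzkinSet q (n - 2), w = 1 :: (α ++ [0])}

/-- The set A_q(n). -/
def SetA (q n : ℕ) : Set (List ℕ) :=
  {w | ∃ i ≤ n / 2, ∃ α ∈ MotzkinSet q i, ∃ β ∈ ElevatedSet q (n - i), w = α ++ β} \
    {w | ∃ α ∈ ElevatedSet q (n / 2), ∃ β ∈ ElevatedSet q (n / 2), w = α ++ β}

/-- The set B_q(n). -/
def SetB (q n : ℕ) : Set (List ℕ) :=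
  {w | ∃ i ≤ n / 2 - 1, ∃ α ∈ MotzkinSet q i, ∃ β ∈ ElevatedSet q (n - i - 1),
    w = 1 :: (α ++ β)}

/-- The set C_q(n): words γ0 with γ a (q-2)-colored Motzkin word of length n-1
having no factor which is an elevated Motzkin word of length j ≥ ⌈n/2⌉. -/
def SetC (q n : ℕ) : Set (List ℕ) :=
  {w | ∃ γ ∈ MotzkinSet q (n - 1),
    (∀ j, (n + 1) / 2 ≤ j → ∀ β ∈ ElevatedSet q j, ¬ β <:+: γ) ∧ w = γ ++ [0]}

/-- The cross-bifix-free candidate set CBFS_q(n). -/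
def CBFS (q n : ℕ) : Set (List ℕ) := SetA q n ∪ SetB q n ∪ SetC q n

/-- A word is bifix-free if no nonempty proper prefix of it is also a suffix of it. -/
def BifixFree (w : List ℕ) : Prop :=
  ∀ u, u <+: w → u ≠ [] → u.length < w.length → ¬ u <:+ w

/-- BF_q(n): the set of bifix-free words of length n over Z_q. -/
def BF (q n : ℕ) : Set (List ℕ) := {w | w.length = n ∧ (∀ a ∈ w, a < q) ∧ BifixFree w}

/-- F_{k,q}(n): the number of words of length n over Z_q avoiding k consecutive 0's. -/
noncomputable def Fcount (k q n : ℕ) : ℕ :=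
  {w : List ℕ | w.length = n ∧ (∀ a ∈ w, a < q) ∧ ¬ List.replicate k 0 <:+: w}.ncard

/-- The set S_{k,q}(n) of Bajic--Stojanovic--Chee--Kiah type words: words s of length n
over Z_q with s₁ = ⋯ = s_k = 0, s_{k+1} ≠ 0, s_n ≠ 0, and such that the subword
s_{k+2} ⋯ s_{n-1} contains no k consecutive 0's. -/
def SetS (q k n : ℕ) : Set (List ℕ) :=
  {s | s.length = n ∧ (∀ a ∈ s, a < q) ∧ s.take k = List.replicate k 0 ∧
    s.getD k 0 ≠ 0 ∧ s.getLast? ≠ some 0 ∧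
    ¬ List.replicate k 0 <:+: (s.drop (k + 1)).take (n - k - 2)}

/-!
A factorisation `αβ` with `α` a Motzkin word and `β` elevated is unique: every nonempty proper
prefix of an elevated word has positive value-sum, so no prefix of `αβ` longer than `α` has
value-sum `0`. Hence the pieces `𝓜(i)·Ê(n-i)` making up `SetA q n` are disjoint, the `i`-th
having `M(i)·M(n-i-2)` elements. The removed words `Ê(n/2)·Ê(n/2)` have the wrong length when
`n` is odd, and all lie in the piece `i = n/2` when `n` is even.
-/

@[simp] lemma mval_one : mval 1 = 1 := rfl

@[simp] lemma mval_zero : mval 0 = -1 := rfl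

@[simp] lemma vsum_nil : vsum [] = 0 := rfl

@[simp] lemma vsum_cons (a : ℕ) (w : List ℕ) : vsum (a :: w) = mval a + vsum w := by
  simp [vsum]

@[simp] lemma vsum_append (u v : List ℕ) : vsum (u ++ v) = vsum u + vsum v := by
  simp [vsum]

lemma length_eq_of_mem_image2_append {α : Type*} {s t : Set (List α)} {a b : ℕ}
    (hs : ∀ u ∈ s, u.length = a) (ht : ∀ v ∈ t, v.length = b) {w : List α}
    (hw : w ∈ Set.image2 (· ++ ·) s t) : w.length = a + b := by
  obtain ⟨u, hu, v, hv, rfl⟩ := hw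
  rw [List.length_append, hs u hu, ht v hv]

lemma ncard_image2_append {α : Type*} {s t : Set (List α)} {m : ℕ}
    (hs : ∀ u ∈ s, u.length = m) :
    (Set.image2 (· ++ ·) s t).ncard = s.ncard * t.ncard := by
  rw [← Set.image_prod, Set.InjOn.ncard_image, Set.ncard_prod]
  rintro ⟨u, v⟩ ⟨hu, -⟩ ⟨u', v'⟩ ⟨hu', -⟩ h
  obtain ⟨rfl, rfl⟩ := List.append_inj h ((hs u hu).trans (hs u' hu').symm)
  rfl

lemma IsMotzkinWord.elevate {q : ℕ} (hq : 2 ≤ q) {w : List ℕ} (hw : IsMotzkinWord q w) :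
    IsMotzkinWord q (1 :: (w ++ [0])) := by
  obtain ⟨hlt, hpre, hsum⟩ := hw
  refine ⟨?_, ?_, by simp [hsum]⟩
  · intro a ha
    simp only [List.mem_cons, List.mem_append, List.not_mem_nil, or_false] at ha
    rcases ha with rfl | ha | rfl
    exacts [by omega, hlt a ha, by omega]
  · intro u hu
    rcases List.prefix_cons_iff.1 hu with rfl | ⟨v, rfl, hv⟩
    · simp
    rcases List.prefix_concat_iff.1 hv with rfl | hv
    · simp [hsum]
    · simp only [vsum_cons, mval_one]
      linarith [hpre v hv]

lemma IsMotzkinWord.one_le_vsum_take_elevate {q : ℕ} {w : List ℕ} (hw : IsMotzkinWord q w)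
    {k : ℕ} (hk₀ : 0 < k) (hk : k < w.length + 2) :
    1 ≤ vsum ((1 :: (w ++ [0])).take k) := by
  obtain ⟨k, rfl⟩ := Nat.exists_eq_add_one_of_ne_zero hk₀.ne'
  rw [List.take_succ_cons, List.take_append_of_le_length (by omega)]
  simpa using hw.2.1 _ (List.take_prefix k w)

lemma motzkinSet_finite (q n : ℕ) : (MotzkinSet q n).Finite := by
  refine (Set.finite_range fun g : Fin n → Fin q ↦ List.ofFn fun i ↦ (g i : ℕ)).subset ?_
  rintro w ⟨rfl, hlt, -⟩
  exact ⟨fun i ↦ ⟨w[i], hlt _ (List.getElem_mem _)⟩, List.ofFn_getElem⟩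

lemma elevatedSet_subset_image (q n : ℕ) :
    ElevatedSet q n ⊆ (fun γ ↦ 1 :: (γ ++ [0])) '' MotzkinSet q (n - 2) := by
  rintro _ ⟨-, γ, hγ, rfl⟩
  exact ⟨γ, hγ, rfl⟩

lemma elevatedSet_finite (q n : ℕ) : (ElevatedSet q n).Finite :=
  ((motzkinSet_finite q (n - 2)).image _).subset (elevatedSet_subset_image q n)

lemma elevatedSet_eq_image (q : ℕ) {n : ℕ} (hn : 2 ≤ n) :
    ElevatedSet q n = (fun γ ↦ 1 :: (γ ++ [0])) '' MotzkinSet q (n - 2) := by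
  refine (elevatedSet_subset_image q n).antisymm ?_
  rintro _ ⟨γ, hγ, rfl⟩
  exact ⟨by simp [hγ.1]; omega, γ, hγ, rfl⟩

lemma ncard_elevatedSet (q : ℕ) {n : ℕ} (hn : 2 ≤ n) :
    (ElevatedSet q n).ncard = Mnum q (n - 2) := by
  rw [elevatedSet_eq_image q hn, Set.InjOn.ncard_image, Mnum]
  intro γ _ γ' _ h
  simpa using h

lemma elevatedSet_subset_motzkinSet {q : ℕ} (hq : 2 ≤ q) (n : ℕ) :
    ElevatedSet q n ⊆ MotzkinSet q n := by
  rintro _ ⟨hlen, γ, hγ, rfl⟩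
  exact ⟨hlen, hγ.2.elevate hq⟩

lemma length_le_of_append_elevate_eq {q : ℕ} {α γ α' β' : List ℕ} (hα : vsum α = 0)
    (hγ : IsMotzkinWord q γ) (hα' : vsum α' = 0) (hβ' : β' ≠ [])
    (h : α ++ 1 :: (γ ++ [0]) = α' ++ β') : α'.length ≤ α.length := by
  by_contra! hlt
  have hlen := congrArg List.length h
  simp only [List.length_append, List.length_cons, List.length_nil] at hlen
  have hβ'len : 0 < β'.length := List.length_pos_iff.2 hβ'
  have hpos := hγ.one_le_vsum_take_elevate (k := α'.length - α.length) (by omega) (by omega)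
  have htake : α' = (α ++ 1 :: (γ ++ [0])).take α'.length := by rw [h, List.take_left]
  rw [List.take_append, List.take_of_length_le hlt.le] at htake
  rw [htake, vsum_append, hα] at hα'
  omega

lemma length_eq_of_append_eq_append {q m m' : ℕ} {α α' β β' : List ℕ}
    (hα : IsMotzkinWord q α) (hα' : IsMotzkinWord q α')
    (hβ : β ∈ ElevatedSet q m) (hβ' : β' ∈ ElevatedSet q m') (h : α ++ β = α' ++ β') :
    α.length = α'.length := by
  obtain ⟨-, γ, hγ, rfl⟩ := hβ
  obtain ⟨-, γ', hγ', rfl⟩ := hβ'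
  exact le_antisymm
    (length_le_of_append_elevate_eq hα'.2.2 hγ'.2 hα.2.2 (by simp) h.symm)
    (length_le_of_append_elevate_eq hα.2.2 hγ.2 hα'.2.2 (by simp) h)

lemma pairwiseDisjoint_image2_append (q : ℕ) (f : ℕ → ℕ) (s : Set ℕ) :
    s.PairwiseDisjoint fun i ↦ Set.image2 (· ++ ·) (MotzkinSet q i) (ElevatedSet q (f i)) := by
  intro i _ j _ hij
  refine Set.disjoint_left.2 ?_
  rintro _ ⟨α, hα, β, hβ, rfl⟩ ⟨α', hα', β', hβ', h⟩
  exact hij (hα.1.symm.trans ((length_eq_of_append_eq_append hα.2 hα'.2 hβ hβ' h.symm).trans hα'.1))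

lemma ncard_biUnion_image2_append (q : ℕ) {m n : ℕ} (hmn : m + 2 ≤ n) :
    (⋃ i ∈ Finset.range (m + 1),
        Set.image2 (· ++ ·) (MotzkinSet q i) (ElevatedSet q (n - i))).ncard =
      ∑ i ∈ Finset.range (m + 1), Mnum q i * Mnum q (n - i - 2) := by
  rw [← Finset.set_biUnion_coe, Set.Finite.ncard_biUnion (Finset.finite_toSet _)
    (fun i _ ↦ (motzkinSet_finite q i).image2 _ (elevatedSet_finite q _))
    (pairwiseDisjoint_image2_append q (n - ·) _), finsum_mem_coe_finset]
  refine Finset.sum_congr rfl fun i hi ↦ ?_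
  have hi : i ≤ m := Finset.mem_range_succ_iff.1 hi
  rw [ncard_image2_append (fun _ h ↦ h.1), ncard_elevatedSet q (by omega), Nat.sub_sub]
  rfl

lemma setA_eq (q n : ℕ) :
    SetA q n = (⋃ i ∈ Finset.range (n / 2 + 1),
        Set.image2 (· ++ ·) (MotzkinSet q i) (ElevatedSet q (n - i))) \
      Set.image2 (· ++ ·) (ElevatedSet q (n / 2)) (ElevatedSet q (n / 2)) := by
  ext w
  simp [SetA, Set.mem_image2, eq_comm]

lemma ncard_setA_of_odd (q : ℕ) {n : ℕ} (hn : 3 ≤ n) (hodd : Odd n) :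
    (SetA q n).ncard = ∑ i ∈ Finset.range (n / 2 + 1), Mnum q i * Mnum q (n - i - 2) := by
  rw [setA_eq, Disjoint.sdiff_eq_left, ncard_biUnion_image2_append q (by omega)]
  refine Set.disjoint_left.2 fun w hwU hwD ↦ ?_
  obtain ⟨i, hi, hwi⟩ := Set.mem_iUnion₂.1 hwU
  have hlenU := length_eq_of_mem_image2_append (fun _ h ↦ h.1) (fun _ h ↦ h.1) hwi
  have hlenD := length_eq_of_mem_image2_append (fun _ h ↦ h.1) (fun _ h ↦ h.1) hwD
  have := Finset.mem_range_succ_iff.1 hi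
  have := Nat.odd_iff.1 hodd
  omega

lemma ncard_setA_add_sq_of_even {q : ℕ} (hq : 2 ≤ q) {n : ℕ} (hn : 3 ≤ n) (heven : Even n) :
    (SetA q n).ncard + Mnum q (n / 2 - 2) ^ 2 =
      ∑ i ∈ Finset.range (n / 2 + 1), Mnum q i * Mnum q (n - i - 2) := by
  have hhalf := Nat.even_iff.1 heven
  set U := ⋃ i ∈ Finset.range (n / 2 + 1),
    Set.image2 (· ++ ·) (MotzkinSet q i) (ElevatedSet q (n - i))
  set D := Set.image2 (· ++ ·) (ElevatedSet q (n / 2)) (ElevatedSet q (n / 2))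
  have hDU : D ⊆ U := by
    have hpiece : D ⊆ Set.image2 (· ++ ·) (MotzkinSet q (n / 2)) (ElevatedSet q (n - n / 2)) := by
      rw [show n - n / 2 = n / 2 by omega]
      exact Set.image2_subset_right (elevatedSet_subset_motzkinSet hq _)
    exact hpiece.trans (Set.subset_biUnion_of_mem (u := fun i ↦
      Set.image2 (· ++ ·) (MotzkinSet q i) (ElevatedSet q (n - i))) (by simp))
  have hD : D.ncard = Mnum q (n / 2 - 2) ^ 2 := by
    rw [ncard_image2_append (fun _ h ↦ h.1), ncard_elevatedSet q (by omega), sq]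
  have hUfin : U.Finite := (Finset.range _).finite_toSet.biUnion fun i _ ↦
    (motzkinSet_finite q i).image2 _ (elevatedSet_finite q _)
  rw [setA_eq, ← hD, Set.ncard_sdiff_add_ncard_of_subset hDU hUfin,
    ncard_biUnion_image2_append q (by omega)]

/-- If n is odd then |A_q(n)| = Σ_{i=0}^{⌊n/2⌋} M_{q-2}(i)·M_{q-2}(n-i-2);
if n is even then |A_q(n)| = Σ_{i=0}^{n/2} M_{q-2}(i)·M_{q-2}(n-i-2) − M_{q-2}(n/2-2)². -/
theorem setA_card (q n : ℕ) (hq : 3 ≤ q) (hn : 3 ≤ n) :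
    (Odd n → (SetA q n).ncard =
      ∑ i ∈ Finset.range (n / 2 + 1), Mnum q i * Mnum q (n - i - 2)) ∧
    (Even n → ((SetA q n).ncard : ℤ) =
      ∑ i ∈ Finset.range (n / 2 + 1), (Mnum q i : ℤ) * (Mnum q (n - i - 2) : ℤ) -
        (Mnum q (n / 2 - 2) : ℤ) ^ 2) := by
  refine ⟨ncard_setA_of_odd q hn, fun heven ↦ ?_⟩
  rw [eq_sub_iff_add_eq]
  exact_mod_cast ncard_setA_add_sq_of_even (show 2 ≤ q by omega) hn heven
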